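/- If ν > 0, every solution of the Hopf system converges to the origin as t → +∞, i.e., the singleton {(0,0,0)} attracts all trajectories. -/

import Mathlib

/-!
Along a trajectory, `V = x² + y² + z²` satisfies
`V' = -2μx² - 2ν(y² + z²) ≤ -2 min(μ, ν) V`: the quadratic terms cancel and the rotation
by `β` preserves `y² + z²`.
Hence `V(t) e^{2 min(μ, ν) t}` is nonincreasing, so `V` decays exponentially and every
coordinate, being bounded in square by `V`, tends to `0`.
-/

open Real Filter Topology

section ExponentialDecay

variable {V V' : ℝ → ℝ} {k : ℝ}

theorem antitone_mul_exp_of_hasDerivAt_le (hV : ∀ t, HasDerivAt V (V' t) t)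
    (hle : ∀ t, V' t ≤ -k * V t) : Antitone fun t => V t * exp (k * t) := by
  have hderiv : ∀ t, HasDerivAt (fun t => V t * exp (k * t))
      (V' t * exp (k * t) + V t * (exp (k * t) * k)) t := fun t =>
    (hV t).mul (((hasDerivAt_id t).const_mul k).exp.congr_deriv (by simp))
  refine antitone_of_deriv_nonpos (fun t => (hderiv t).differentiableAt) fun t => ?_
  rw [(hderiv t).deriv]
  have : V' t + k * V t ≤ 0 := by linarith [hle t]
  nlinarith [exp_pos (k * t)]

theorem le_mul_exp_neg_of_hasDerivAt_le (hV : ∀ t, HasDerivAt V (V' t) t)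
    (hle : ∀ t, V' t ≤ -k * V t) {t : ℝ} (ht : 0 ≤ t) : V t ≤ V 0 * exp (-(k * t)) := by
  have h := antitone_mul_exp_of_hasDerivAt_le hV hle ht
  simp only [mul_zero, exp_zero, mul_one] at h
  rwa [exp_neg, ← div_eq_mul_inv, le_div_iff₀ (exp_pos _)]

theorem tendsto_zero_of_hasDerivAt_le_neg_mul (hk : 0 < k) (hV₀ : ∀ t, 0 ≤ V t)
    (hV : ∀ t, HasDerivAt V (V' t) t) (hle : ∀ t, V' t ≤ -k * V t) :
    Tendsto V atTop (𝓝 0) := by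
  have hexp : Tendsto (fun t => V 0 * exp (-(k * t))) atTop (𝓝 0) := by
    have := tendsto_exp_atBot.comp
      (tendsto_neg_atBot_iff.mpr (tendsto_id.const_mul_atTop hk))
    simpa using this.const_mul (V 0)
  refine tendsto_of_tendsto_of_tendsto_of_le_of_le' tendsto_const_nhds hexp
    (Eventually.of_forall hV₀) ?_
  filter_upwards [eventually_ge_atTop 0] with t ht
  exact le_mul_exp_neg_of_hasDerivAt_le hV hle ht

end ExponentialDecay

theorem tendsto_nhds_zero_of_sq_le {α : Type*} {l : Filter α} {f g : α → ℝ}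
    (hg : Tendsto g l (𝓝 0)) (hfg : ∀ a, f a ^ 2 ≤ g a) : Tendsto f l (𝓝 0) := by
  have hsqrt : Tendsto (fun a => √(g a)) l (𝓝 0) := by simpa using hg.sqrt
  refine squeeze_zero_norm (fun a => ?_) hsqrt
  rw [norm_eq_abs, ← sqrt_sq_eq_abs]
  exact sqrt_le_sqrt (hfg a)

theorem hopf_hasDerivAt_sq_sum {μ β ν : ℝ} {x y z : ℝ → ℝ}
    (hx : ∀ t : ℝ, HasDerivAt x (-μ * x t - (y t)^2 - (z t)^2) t)
    (hy : ∀ t : ℝ, HasDerivAt y (-ν * y t + x t * y t + β * z t) t)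
    (hz : ∀ t : ℝ, HasDerivAt z (-ν * z t + x t * z t - β * y t) t) (t : ℝ) :
    HasDerivAt (fun t => x t ^ 2 + y t ^ 2 + z t ^ 2)
      (-2 * μ * x t ^ 2 - 2 * ν * (y t ^ 2 + z t ^ 2)) t :=
  ((((hx t).pow 2).add ((hy t).pow 2)).add ((hz t).pow 2)).congr_deriv
    (by norm_num; ring)

theorem hopf_dissipation_le {μ ν : ℝ} (a b c : ℝ) :
    -2 * μ * a ^ 2 - 2 * ν * (b ^ 2 + c ^ 2) ≤ -(2 * min μ ν) * (a ^ 2 + b ^ 2 + c ^ 2) := by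
  linarith [mul_le_mul_of_nonneg_right (min_le_left μ ν) (sq_nonneg a),
    mul_le_mul_of_nonneg_right (min_le_right μ ν) (add_nonneg (sq_nonneg b) (sq_nonneg c))]

theorem stmt7 (μ β ν : ℝ) (hμ : 0 < μ) (hν : 0 < ν) (x y z : ℝ → ℝ)
    (hx : ∀ t : ℝ, HasDerivAt x (-μ * x t - (y t)^2 - (z t)^2) t)
    (hy : ∀ t : ℝ, HasDerivAt y (-ν * y t + x t * y t + β * z t) t)
    (hz : ∀ t : ℝ, HasDerivAt z (-ν * z t + x t * z t - β * y t) t) :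
    Filter.Tendsto (fun t => (x t, y t, z t)) Filter.atTop
      (nhds ((0, 0, 0) : ℝ × ℝ × ℝ)) := by
  have hV : Tendsto (fun t => x t ^ 2 + y t ^ 2 + z t ^ 2) atTop (𝓝 0) :=
    tendsto_zero_of_hasDerivAt_le_neg_mul (by positivity) (fun t => by positivity)
      (hopf_hasDerivAt_sq_sum hx hy hz) fun t => hopf_dissipation_le (x t) (y t) (z t)
  have hx₀ : Tendsto x atTop (𝓝 0) :=
    tendsto_nhds_zero_of_sq_le hV fun t => by linarith [sq_nonneg (y t), sq_nonneg (z t)]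
  have hy₀ : Tendsto y atTop (𝓝 0) :=
    tendsto_nhds_zero_of_sq_le hV fun t => by linarith [sq_nonneg (x t), sq_nonneg (z t)]
  have hz₀ : Tendsto z atTop (𝓝 0) :=
    tendsto_nhds_zero_of_sq_le hV fun t => by linarith [sq_nonneg (x t), sq_nonneg (y t)]
  exact hx₀.prodMk_nhds (hy₀.prodMk_nhds hz₀)
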